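/- Let G_0, G_1, G_2, … be a sequence of graphs with G_i = G_{i−1} ∪ w_i (adding an isolated vertex) for odd i ≥ 1 and G_i = G_{i−1} ∨ w_i (adding a vertex adjacent to all existing vertices) for even i ≥ 2. Set a = |det(A(G_0))| and p = |det(A(Ḡ_1))|, where Ḡ_1 is the complement of G_1. Then for every i ≥ 0, |det(A(G_{2i}))| = a and |det(A(Ḡ_{2i+1}))| = p. -/

import Mathlib

open Matrix

open scoped Classical in
/-- The 0/1 adjacency matrix of a simple graph, over the integers. -/
noncomputable def adjMat {V : Type*} [Fintype V] (G : SimpleGraph V) : Matrix V V ℤ :=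
  Matrix.of fun u v => if G.Adj u v then (1 : ℤ) else 0

/-- The walk matrix of a simple graph on `Fin n`: its `j`-th column is ``A^j e``
where `e` is the all-ones vector. -/
noncomputable def walkMat {n : ℕ} (G : SimpleGraph (Fin n)) : Matrix (Fin n) (Fin n) ℤ :=
  Matrix.of fun i j => ((adjMat G ^ (j : ℕ)) *ᵥ fun _ => (1 : ℤ)) i

/-- `G ∪ w`: adjoin a new vertex (labelled `0`) adjacent to no vertex of `G`;
the original vertex `i` of `G` becomes `i.succ`. -/
def unionVertex {n : ℕ} (G : SimpleGraph (Fin n)) : SimpleGraph (Fin (n + 1)) where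
  Adj u v := ∃ i j : Fin n, u = i.succ ∧ v = j.succ ∧ G.Adj i j
  symm := by
    constructor
    rintro u v ⟨i, j, hu, hv, h⟩
    exact ⟨j, i, hv, hu, h.symm⟩
  loopless := by
    constructor
    rintro u ⟨i, j, rfl, hv, h⟩
    obtain rfl : i = j := Fin.succ_inj.mp hv
    exact G.irrefl h

/-- `G ∨ w`: adjoin a new vertex (labelled `0`) adjacent to every vertex of `G`;
the original vertex `i` of `G` becomes `i.succ`. -/
def joinVertex {n : ℕ} (G : SimpleGraph (Fin n)) : SimpleGraph (Fin (n + 1)) where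
  Adj u v := (u = 0 ∧ v ≠ 0) ∨ (v = 0 ∧ u ≠ 0) ∨
    ∃ i j : Fin n, u = i.succ ∧ v = j.succ ∧ G.Adj i j
  symm := by
    constructor
    rintro u v (⟨h1, h2⟩ | ⟨h1, h2⟩ | ⟨i, j, hu, hv, h⟩)
    · exact Or.inr (Or.inl ⟨h1, h2⟩)
    · exact Or.inl ⟨h1, h2⟩
    · exact Or.inr (Or.inr ⟨j, i, hv, hu, h.symm⟩)
  loopless := by
    constructor
    rintro u (⟨h1, h2⟩ | ⟨h1, h2⟩ | ⟨i, j, rfl, hv, h⟩)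
    · exact h2 h1
    · exact h2 h1
    · obtain rfl : i = j := Fin.succ_inj.mp hv
      exact G.irrefl h

/-- The sequence `G₀, G₁, G₂, …` where `Gᵢ = G_{i-1} ∪ wᵢ` for odd `i` and
`Gᵢ = G_{i-1} ∨ wᵢ` for even `i ≥ 2`. -/
def seqGraph {n0 : ℕ} (G0 : SimpleGraph (Fin n0)) : (i : ℕ) → SimpleGraph (Fin (n0 + i))
  | 0 => G0
  | (i + 1) => if (i + 1) % 2 = 1 then unionVertex (seqGraph G0 i) else joinVertex (seqGraph G0 i)

/-- A graph is determined by its generalized spectrum. -/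
def IsDGS {n : ℕ} (G : SimpleGraph (Fin n)) : Prop :=
  ∀ H : SimpleGraph (Fin n),
    (adjMat H).charpoly = (adjMat G).charpoly →
    (adjMat Hᶜ).charpoly = (adjMat Gᶜ).charpoly →
    Nonempty (H ≃g G)

/-! The key identity is `det A((G ∪ w) ∨ w') = -det A(G)`: in `(G ∪ w) ∨ w'` the vertex `w` is a
leaf hanging on `w'`, and expanding the determinant along the row and then the column of `w`
deletes both. Two steps of the sequence turn `G₂ᵢ` into `(G₂ᵢ ∪ w) ∨ w'`, and, since
`(H ∪ w)ᶜ = Hᶜ ∨ w` and `(H ∨ w)ᶜ = Hᶜ ∪ w`, they turn `Ḡ₂ᵢ₊₁` into `(Ḡ₂ᵢ₊₁ ∪ w) ∨ w'`. -/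

namespace Matrix

theorem det_eq_neg_det_submatrix_succ_succ {R : Type*} [CommRing R] {n : ℕ}
    (M : Matrix (Fin (n + 2)) (Fin (n + 2)) R) (hrow : M 1 = Pi.single 0 1)
    (hcol : Mᵀ 1 = Pi.single 0 1) :
    M.det = -(M.submatrix (Fin.succ ∘ Fin.succ) (Fin.succ ∘ Fin.succ)).det := by
  have hcol' (i : Fin (n + 2)) : M i 1 = (Pi.single 0 1 : Fin (n + 2) → R) i := by
    rw [← hcol, transpose_apply]
  have hsucc : Fin.succAbove 1 ∘ Fin.succ = (Fin.succ ∘ Fin.succ : Fin n → Fin (n + 2)) :=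
    funext Fin.one_succAbove_succ
  rw [det_succ_row M 1, Fintype.sum_eq_single 0 (fun j hj => by simp [hrow, hj]),
    det_succ_column _ 0, Fintype.sum_eq_single 0 (fun i hi => ?_)]
  · simp [hrow, hcol', hsucc]
  · cases i using Fin.cases
    · contradiction
    · simp [hcol']

end Matrix

section AddVertex

variable {n : ℕ} (G : SimpleGraph (Fin n))

@[simp]
theorem unionVertex_adj_succ_succ (i j : Fin n) :
    (unionVertex G).Adj i.succ j.succ ↔ G.Adj i j := by
  simp [unionVertex]

@[simp]
theorem unionVertex_not_adj_zero_left (v : Fin (n + 1)) : ¬(unionVertex G).Adj 0 v := by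
  simp [unionVertex, eq_comm]

@[simp]
theorem unionVertex_not_adj_zero_right (u : Fin (n + 1)) : ¬(unionVertex G).Adj u 0 :=
  fun h => unionVertex_not_adj_zero_left G u h.symm

@[simp]
theorem joinVertex_adj_succ_succ (i j : Fin n) :
    (joinVertex G).Adj i.succ j.succ ↔ G.Adj i j := by
  simp [joinVertex]

@[simp]
theorem joinVertex_adj_zero_left (v : Fin (n + 1)) : (joinVertex G).Adj 0 v ↔ v ≠ 0 := by
  simp [joinVertex, eq_comm]

@[simp]
theorem joinVertex_adj_zero_right (u : Fin (n + 1)) : (joinVertex G).Adj u 0 ↔ u ≠ 0 := by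
  rw [SimpleGraph.adj_comm, joinVertex_adj_zero_left]

theorem compl_unionVertex : (unionVertex G)ᶜ = joinVertex Gᶜ := by
  ext u v
  cases u using Fin.cases <;> cases v using Fin.cases <;> simp [eq_comm]

theorem compl_joinVertex : (joinVertex G)ᶜ = unionVertex Gᶜ := by
  ext u v
  cases u using Fin.cases <;> cases v using Fin.cases <;> simp [eq_comm]

end AddVertex

section AdjMat

open scoped Classical in
theorem adjMat_apply {V : Type*} [Fintype V] (G : SimpleGraph V) (u v : V) :
    adjMat G u v = if G.Adj u v then 1 else 0 := rfl

theorem adjMat_transpose {V : Type*} [Fintype V] (G : SimpleGraph V) :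
    (adjMat G)ᵀ = adjMat G := by
  ext u v
  rw [transpose_apply, adjMat_apply, adjMat_apply, G.adj_comm]

variable {n : ℕ} (G : SimpleGraph (Fin n))

theorem adjMat_joinVertex_unionVertex_one :
    adjMat (joinVertex (unionVertex G)) 1 = Pi.single 0 1 := by
  ext j
  cases j using Fin.cases with
  | zero => simp [adjMat_apply]
  | succ j =>
    rw [adjMat_apply, ← Fin.succ_zero_eq_one, joinVertex_adj_succ_succ]
    simp

theorem submatrix_succ_succ_adjMat_joinVertex_unionVertex :
    (adjMat (joinVertex (unionVertex G))).submatrix (Fin.succ ∘ Fin.succ) (Fin.succ ∘ Fin.succ) =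
      adjMat G := by
  ext i j
  rw [submatrix_apply, Function.comp_apply, Function.comp_apply, adjMat_apply, adjMat_apply,
    joinVertex_adj_succ_succ, unionVertex_adj_succ_succ]

theorem det_adjMat_joinVertex_unionVertex :
    (adjMat (joinVertex (unionVertex G))).det = -(adjMat G).det := by
  rw [Matrix.det_eq_neg_det_submatrix_succ_succ _ (adjMat_joinVertex_unionVertex_one G)
    (by rw [adjMat_transpose, adjMat_joinVertex_unionVertex_one]),
    submatrix_succ_succ_adjMat_joinVertex_unionVertex]

end AdjMat

section SeqGraph

variable {n0 : ℕ} (G0 : SimpleGraph (Fin n0)) {k : ℕ}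

theorem seqGraph_add_two_of_even (hk : Even k) :
    seqGraph G0 (k + 2) = joinVertex (unionVertex (seqGraph G0 k)) := by
  rw [seqGraph, if_neg (by grind), seqGraph, if_pos (by grind)]

theorem compl_seqGraph_add_two_of_odd (hk : Odd k) :
    (seqGraph G0 (k + 2))ᶜ = joinVertex (unionVertex (seqGraph G0 k)ᶜ) := by
  rw [seqGraph, if_pos (by grind), seqGraph, if_neg (by grind), compl_unionVertex,
    compl_joinVertex]

end SeqGraph

/-- with `a = |det A(G₀)|` and `p = |det A(Ḡ₁)|`, for every `i ≥ 0` we have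
`|det A(G₂ᵢ)| = a` and `|det A(Ḡ₂ᵢ₊₁)| = p`. -/
theorem natAbs_det_adjMat_seqGraph {n0 : ℕ} (G0 : SimpleGraph (Fin n0)) (i : ℕ) :
    ((adjMat (seqGraph G0 (2 * i))).det).natAbs = ((adjMat G0).det).natAbs ∧
      ((adjMat (seqGraph G0 (2 * i + 1))ᶜ).det).natAbs =
        ((adjMat (seqGraph G0 1)ᶜ).det).natAbs := by
  induction i with
  | zero => exact ⟨rfl, rfl⟩
  | succ i ih =>
    obtain ⟨ih_even, ih_odd⟩ := ih
    constructor
    · rw [← ih_even, show 2 * (i + 1) = 2 * i + 2 by ring,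
        seqGraph_add_two_of_even G0 (even_two_mul i), det_adjMat_joinVertex_unionVertex,
        Int.natAbs_neg]
    · rw [← ih_odd, show 2 * (i + 1) + 1 = 2 * i + 1 + 2 by ring,
        compl_seqGraph_add_two_of_odd G0 (odd_two_mul_add_one i),
        det_adjMat_joinVertex_unionVertex, Int.natAbs_neg]
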